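/- arXiv:1901.06521 — 4 statements merged into one kernel-verified Lean document; each statement's English description precedes it below -/
import Mathlib

section
/- Fix an integer n ≥ 1, an integer k ≥ 1, a fixed family of couplings J_X ∈ ℝ for X ⊆ {1,…,n}, a fixed vector τ ∈ ℕⁿ, and h₁ ∈ [0,1]. Assume that for every h₀ ∈ (0,1) the Gibbs measure of the perturbed Hamiltonian satisfies ⟨σᵢσⱼ⟩ − ⟨σᵢ⟩⟨σⱼ⟩ ≥ 0 for all i, j ∈ {1,…,n}. Then for any interval [h̲, h̄] ⊂ (0,1), the integral over h₀ ∈ [h̲, h̄] of ⟨(Q_k − ⟨Q_k⟩)²⟩ (where the Gibbs average is taken at field strength h₀) is at most 2k/n. -/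
open MeasureTheory ProbabilityTheory Finset

noncomputable section

/-- The real value of a Boolean spin: `true ↦ 1`, `false ↦ -1`. -/
def spinVal (b : Bool) : ℝ := if b then 1 else -1

/-- The product of spins over a subset `X ⊆ {1,…,n}`. -/
def spinProd {n : ℕ} (X : Finset (Fin n)) (σ : Fin n → Bool) : ℝ :=
  ∏ i ∈ X, spinVal (σ i)

/-- The perturbed Hamiltonian
`H(σ) = -∑_X J_X σ_X - h₀ ∑ᵢ σᵢ - h₁ ∑ᵢ τᵢ σᵢ`. -/
def Ham (n : ℕ) (J : Finset (Fin n) → ℝ) (h₀ h₁ : ℝ) (τ : Fin n → ℕ)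
    (σ : Fin n → Bool) : ℝ :=
  -(∑ X : Finset (Fin n), J X * spinProd X σ)
    - h₀ * ∑ i, spinVal (σ i) - h₁ * ∑ i, (τ i : ℝ) * spinVal (σ i)

/-- The partition function `Z = ∑_σ e^{-H(σ)}`. -/
def Zp (n : ℕ) (H : (Fin n → Bool) → ℝ) : ℝ :=
  ∑ σ : Fin n → Bool, Real.exp (-(H σ))

/-- The Gibbs average `⟨f⟩ = Z⁻¹ ∑_σ f(σ) e^{-H(σ)}`. -/
def gibbs (n : ℕ) (H : (Fin n → Bool) → ℝ) (f : (Fin n → Bool) → ℝ) : ℝ :=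
  (∑ σ : Fin n → Bool, f σ * Real.exp (-(H σ))) / Zp n H

/-- The replicated Gibbs average of a function of `k` i.i.d. replicas. -/
def gibbsRep (n k : ℕ) (H : (Fin n → Bool) → ℝ)
    (f : (Fin k → Fin n → Bool) → ℝ) : ℝ :=
  (∑ σs : Fin k → Fin n → Bool, f σs * ∏ a, Real.exp (-(H (σs a)))) / (Zp n H) ^ k

/-- The multi-overlap `Q_k = n⁻¹ ∑ᵢ σᵢ⁽¹⁾⋯σᵢ⁽ᵏ⁾` of `k` replicas. -/
def QkRep (n k : ℕ) (σs : Fin k → Fin n → Bool) : ℝ :=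
  (n : ℝ)⁻¹ * ∑ i, ∏ a, spinVal (σs a i)

/-- The local magnetization `⟨σᵢ⟩`. -/
def magg (n : ℕ) (H : (Fin n → Bool) → ℝ) (i : Fin n) : ℝ :=
  gibbs n H fun σ => spinVal (σ i)

/-- The two-point function `⟨σᵢσⱼ⟩`. -/
def corrr (n : ℕ) (H : (Fin n → Bool) → ℝ) (i j : Fin n) : ℝ :=
  gibbs n H fun σ => spinVal (σ i) * spinVal (σ j)

/-- `⟨Q_k⟩ = n⁻¹ ∑ᵢ ⟨σᵢ⟩ᵏ`, the Gibbs average of the multi-overlap. -/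
def avgQ (n k : ℕ) (H : (Fin n → Bool) → ℝ) : ℝ :=
  gibbsRep n k H (QkRep n k)

/-- The product of `n` i.i.d. Poisson(`r`) distributions on `ℕⁿ`. -/
def ppi (n : ℕ) (r : ℝ) : Measure (Fin n → ℕ) :=
  Measure.pi fun _ : Fin n => poissonMeasure (Real.toNNReal r)

end

/-! The replicas being independent, `⟨(Q_k - ⟨Q_k⟩)²⟩ = n⁻² ∑ᵢⱼ (⟨σᵢσⱼ⟩ᵏ - ⟨σᵢ⟩ᵏ⟨σⱼ⟩ᵏ)`.
All correlations lie in `[-1, 1]` and `⟨σᵢ⟩⟨σⱼ⟩ ≤ ⟨σᵢσⱼ⟩`, so each term is at most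
`k (⟨σᵢσⱼ⟩ - ⟨σᵢ⟩⟨σⱼ⟩)`, and `∑ⱼ (⟨σᵢσⱼ⟩ - ⟨σᵢ⟩⟨σⱼ⟩) = ∂⟨σᵢ⟩/∂h₀`. Integrating in `h₀`, the
integral is at most `k n⁻²` times the increment of the total magnetization `∑ᵢ ⟨σᵢ⟩ ∈ [-n, n]`,
hence at most `2k/n`. -/

lemma Zp_pos (n : ℕ) (H : (Fin n → Bool) → ℝ) : 0 < Zp n H :=
  sum_pos (fun _ _ => Real.exp_pos _) univ_nonempty

lemma abs_spinVal (b : Bool) : |spinVal b| = 1 := by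
  cases b <;> simp [spinVal]

lemma abs_gibbs_le_one {n : ℕ} (H : (Fin n → Bool) → ℝ) {f : (Fin n → Bool) → ℝ}
    (hf : ∀ σ, |f σ| ≤ 1) : |gibbs n H f| ≤ 1 := by
  rw [gibbs, abs_div, abs_of_pos (Zp_pos n H), div_le_one (Zp_pos n H)]
  calc |∑ σ, f σ * Real.exp (-(H σ))|
      ≤ ∑ σ, |f σ| * Real.exp (-(H σ)) := by
        simpa only [abs_mul, Real.abs_exp] using
          abs_sum_le_sum_abs (fun σ => f σ * Real.exp (-(H σ))) univ
    _ ≤ ∑ σ, Real.exp (-(H σ)) :=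
        sum_le_sum fun σ _ => mul_le_of_le_one_left (Real.exp_pos _).le (hf σ)

lemma abs_magg_le_one {n : ℕ} (H : (Fin n → Bool) → ℝ) (i : Fin n) : |magg n H i| ≤ 1 :=
  abs_gibbs_le_one H fun _ => (abs_spinVal _).le

lemma abs_corrr_le_one {n : ℕ} (H : (Fin n → Bool) → ℝ) (i j : Fin n) :
    |corrr n H i j| ≤ 1 :=
  abs_gibbs_le_one H fun σ => by rw [abs_mul, abs_spinVal, abs_spinVal, one_mul]

lemma abs_sum_magg_le {n : ℕ} (H : (Fin n → Bool) → ℝ) : |∑ i, magg n H i| ≤ n :=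
  calc |∑ i, magg n H i| ≤ ∑ i, |magg n H i| := abs_sum_le_sum_abs _ _
    _ ≤ ∑ _i : Fin n, (1 : ℝ) := sum_le_sum fun i _ => abs_magg_le_one H i
    _ = n := by simp

lemma gibbs_sum {n : ℕ} (H : (Fin n → Bool) → ℝ) {ι : Type*} (s : Finset ι)
    (f : ι → (Fin n → Bool) → ℝ) :
    gibbs n H (fun σ => ∑ j ∈ s, f j σ) = ∑ j ∈ s, gibbs n H (f j) := by
  simp only [gibbs, sum_mul, ← sum_div]
  rw [sum_comm]

lemma pow_sub_pow_le_mul_sub {a b : ℝ} (k : ℕ) (hba : b ≤ a) (ha : |a| ≤ 1)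
    (hb : |b| ≤ 1) :
    a ^ k - b ^ k ≤ k * (a - b) :=
  calc a ^ k - b ^ k ≤ |a - b| * k * max |a| |b| ^ (k - 1) :=
        (le_abs_self _).trans (abs_pow_sub_pow_le a b k)
    _ ≤ |a - b| * k * 1 := by gcongr; exact pow_le_one₀ (by positivity) (max_le ha hb)
    _ = k * (a - b) := by rw [abs_of_nonneg (sub_nonneg.2 hba)]; ring

lemma hasDerivAt_gibbs_tilt {n : ℕ} (H S f : (Fin n → Bool) → ℝ) (t : ℝ) :
    HasDerivAt (fun s => gibbs n (fun σ => H σ - s * S σ) f)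
      (gibbs n (fun σ => H σ - t * S σ) (fun σ => f σ * S σ)
        - gibbs n (fun σ => H σ - t * S σ) f * gibbs n (fun σ => H σ - t * S σ) S) t := by
  have hw : ∀ σ, HasDerivAt (fun s => Real.exp (-(H σ - s * S σ)))
      (S σ * Real.exp (-(H σ - t * S σ))) t := fun σ => by
    simpa [mul_comm] using
      (((hasDerivAt_id t).mul_const (S σ)).const_sub (H σ)).neg.exp
  have hsum : ∀ g : (Fin n → Bool) → ℝ,
      HasDerivAt (fun s => ∑ σ, g σ * Real.exp (-(H σ - s * S σ)))
        (∑ σ, g σ * S σ * Real.exp (-(H σ - t * S σ))) t := fun g => by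
    simpa only [mul_assoc] using HasDerivAt.fun_sum fun σ _ => (hw σ).const_mul (g σ)
  have hZ : HasDerivAt (fun s => ∑ σ, Real.exp (-(H σ - s * S σ)))
      (∑ σ, S σ * Real.exp (-(H σ - t * S σ))) t := by
    simpa using hsum fun _ => 1
  have hZ0 : ∑ σ, Real.exp (-(H σ - t * S σ)) ≠ 0 := (Zp_pos n _).ne'
  refine ((hsum f).div hZ hZ0).congr_deriv ?_
  rw [gibbs, gibbs, gibbs, Zp, div_mul_div_comm, sub_div, sq,
    mul_div_mul_right _ _ hZ0]

lemma Ham_eq_sub_mul_sum (n : ℕ) (J : Finset (Fin n) → ℝ) (h₀ h₁ : ℝ) (τ : Fin n → ℕ) :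
    Ham n J h₀ h₁ τ = fun σ => Ham n J 0 h₁ τ σ - h₀ * ∑ i, spinVal (σ i) := by
  funext σ
  simp only [Ham]
  ring

lemma hasDerivAt_sum_magg (n : ℕ) (J : Finset (Fin n) → ℝ) (h₁ : ℝ) (τ : Fin n → ℕ)
    (h₀ : ℝ) :
    HasDerivAt (fun h => ∑ i, magg n (Ham n J h h₁ τ) i)
      (∑ i, ∑ j, (corrr n (Ham n J h₀ h₁ τ) i j
        - magg n (Ham n J h₀ h₁ τ) i * magg n (Ham n J h₀ h₁ τ) j)) h₀ := by
  refine HasDerivAt.fun_sum fun i _ => ?_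
  have h := hasDerivAt_gibbs_tilt (Ham n J 0 h₁ τ) (fun σ => ∑ j, spinVal (σ j))
    (fun σ => spinVal (σ i)) h₀
  simp only [← Ham_eq_sub_mul_sum] at h
  simp only [mul_sum, gibbs_sum] at h
  simpa only [magg, corrr, sum_sub_distrib, mul_sum] using h

section Replica

variable {n k : ℕ} (H : (Fin n → Bool) → ℝ)

lemma gibbsRep_prod (f : (Fin n → Bool) → ℝ) :
    gibbsRep n k H (fun σs => ∏ a, f (σs a)) = gibbs n H f ^ k := by
  rw [gibbsRep, gibbs, Zp, div_pow, Fintype.sum_pow, Fintype.sum_pow]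
  simp only [prod_mul_distrib]

lemma gibbsRep_const (c : ℝ) : gibbsRep n k H (fun _ => c) = c := by
  have hW : ∑ σs : Fin k → Fin n → Bool, ∏ a, Real.exp (-(H (σs a))) = Zp n H ^ k :=
    (Fintype.sum_pow (fun σ => Real.exp (-(H σ))) k).symm
  rw [gibbsRep, ← mul_sum, hW, mul_div_assoc, div_self (pow_ne_zero _ (Zp_pos n H).ne'),
    mul_one]

lemma gibbsRep_add (f g : (Fin k → Fin n → Bool) → ℝ) :
    gibbsRep n k H (fun σs => f σs + g σs) = gibbsRep n k H f + gibbsRep n k H g := by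
  simp only [gibbsRep, add_mul, sum_add_distrib, add_div]

lemma gibbsRep_const_mul (c : ℝ) (f : (Fin k → Fin n → Bool) → ℝ) :
    gibbsRep n k H (fun σs => c * f σs) = c * gibbsRep n k H f := by
  simp only [gibbsRep, ← mul_sum, mul_div_assoc, mul_assoc]

lemma gibbsRep_sum {ι : Type*} (s : Finset ι) (f : ι → (Fin k → Fin n → Bool) → ℝ) :
    gibbsRep n k H (fun σs => ∑ i ∈ s, f i σs) = ∑ i ∈ s, gibbsRep n k H (f i) := by
  simp only [gibbsRep, sum_mul, ← sum_div]
  rw [sum_comm]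

lemma gibbsRep_sub_sq (f : (Fin k → Fin n → Bool) → ℝ) :
    gibbsRep n k H (fun σs => (f σs - gibbsRep n k H f) ^ 2)
      = gibbsRep n k H (fun σs => f σs ^ 2) - gibbsRep n k H f ^ 2 := by
  set c := gibbsRep n k H f
  have hexpand : (fun σs => (f σs - c) ^ 2) = fun σs => f σs ^ 2 + ((-2 * c) * f σs + c ^ 2) :=
    funext fun _ => by ring
  rw [hexpand, gibbsRep_add, gibbsRep_add, gibbsRep_const_mul, gibbsRep_const]
  ring

lemma gibbsRep_QkRep :
    gibbsRep n k H (QkRep n k) = (n : ℝ)⁻¹ * ∑ i, magg n H i ^ k := by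
  change gibbsRep n k H (fun σs => (n : ℝ)⁻¹ * ∑ i, ∏ a, spinVal (σs a i)) = _
  rw [gibbsRep_const_mul, gibbsRep_sum]
  exact congrArg _ (sum_congr rfl fun i _ => gibbsRep_prod H fun σ => spinVal (σ i))

lemma gibbsRep_QkRep_sq :
    gibbsRep n k H (fun σs => QkRep n k σs ^ 2)
      = (n : ℝ)⁻¹ ^ 2 * ∑ i, ∑ j, corrr n H i j ^ k := by
  have hsq : ∀ σs : Fin k → Fin n → Bool, QkRep n k σs ^ 2
      = (n : ℝ)⁻¹ ^ 2 * ∑ i, ∑ j, ∏ a, (spinVal (σs a i) * spinVal (σs a j)) := fun σs => by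
    simp only [QkRep, mul_pow, sq (∑ i, _), sum_mul_sum, prod_mul_distrib]
  simp only [hsq, gibbsRep_const_mul, gibbsRep_sum]
  exact congrArg _ (sum_congr rfl fun i _ => sum_congr rfl fun j _ =>
    gibbsRep_prod H fun σ => spinVal (σ i) * spinVal (σ j))

lemma gibbsRep_QkRep_variance :
    gibbsRep n k H (fun σs => (QkRep n k σs - avgQ n k H) ^ 2)
      = (n : ℝ)⁻¹ ^ 2 * ∑ i, ∑ j, (corrr n H i j ^ k - magg n H i ^ k * magg n H j ^ k) := by
  rw [avgQ, gibbsRep_sub_sq, gibbsRep_QkRep_sq, gibbsRep_QkRep, mul_pow, sq (∑ i, _),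
    sum_mul_sum]
  simp only [sum_sub_distrib]
  ring

lemma gibbsRep_QkRep_variance_le (hcov : ∀ i j, magg n H i * magg n H j ≤ corrr n H i j) :
    gibbsRep n k H (fun σs => (QkRep n k σs - avgQ n k H) ^ 2)
      ≤ k * (n : ℝ)⁻¹ ^ 2 * ∑ i, ∑ j, (corrr n H i j - magg n H i * magg n H j) :=
  calc _ = (n : ℝ)⁻¹ ^ 2 * ∑ i, ∑ j, (corrr n H i j ^ k - (magg n H i * magg n H j) ^ k) := by
        simp only [gibbsRep_QkRep_variance, mul_pow]
    _ ≤ (n : ℝ)⁻¹ ^ 2 * ∑ i, ∑ j, k * (corrr n H i j - magg n H i * magg n H j) := by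
        gcongr with i _ j _
        refine pow_sub_pow_le_mul_sub k (hcov i j) (abs_corrr_le_one H i j) ?_
        rw [abs_mul]
        exact mul_le_one₀ (abs_magg_le_one H i) (abs_nonneg _) (abs_magg_le_one H j)
    _ = _ := by simp only [← mul_sum]; ring

end Replica

theorem thermal_concentration_overlaps_general
    (n k : ℕ)
    (J : Finset (Fin n) → ℝ) (τ : Fin n → ℕ)
    (h₁ : ℝ)
    (hGKS2 : ∀ h₀ ∈ Set.Ioo (0 : ℝ) 1, ∀ i j : Fin n,
      magg n (Ham n J h₀ h₁ τ) i * magg n (Ham n J h₀ h₁ τ) j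
        ≤ corrr n (Ham n J h₀ h₁ τ) i j)
    (hlow hhigh : ℝ) (h1 : 0 < hlow) (h2 : hlow ≤ hhigh) (h3 : hhigh < 1) :
    ∫ h₀ in hlow..hhigh,
        gibbsRep n k (Ham n J h₀ h₁ τ)
          (fun σs => (QkRep n k σs - avgQ n k (Ham n J h₀ h₁ τ)) ^ 2)
      ≤ 2 * k / n := by
  set M : ℝ → ℝ := fun h => ∑ i, magg n (Ham n J h h₁ τ) i
  have hM : ∀ h₀, HasDerivAt (fun h => k * (n : ℝ)⁻¹ ^ 2 * M h) _ h₀ := fun h₀ =>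
    (hasDerivAt_sum_magg n J h₁ τ h₀).const_mul _
  by_cases hV : IntervalIntegrable (fun h₀ => gibbsRep n k (Ham n J h₀ h₁ τ)
      (fun σs => (QkRep n k σs - avgQ n k (Ham n J h₀ h₁ τ)) ^ 2)) volume hlow hhigh
  · calc _ ≤ k * (n : ℝ)⁻¹ ^ 2 * M hhigh - k * (n : ℝ)⁻¹ ^ 2 * M hlow :=
          intervalIntegral.integral_le_sub_of_hasDeriv_right_of_le
            (a := hlow) (b := hhigh) h2
            (fun x _ => (hM x).continuousAt.continuousWithinAt)
            (fun x _ => (hM x).hasDerivWithinAt)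
            ((intervalIntegrable_iff_integrableOn_Icc_of_le h2).1 hV)
            fun x hx => gibbsRep_QkRep_variance_le _ (hGKS2 x ⟨h1.trans hx.1, hx.2.trans h3⟩)
      _ ≤ k * (n : ℝ)⁻¹ ^ 2 * (2 * n) := by
          rw [← mul_sub]
          gcongr
          linarith [abs_le.1 (abs_sum_magg_le (Ham n J hhigh h₁ τ)),
            abs_le.1 (abs_sum_magg_le (Ham n J hlow h₁ τ))]
      _ = 2 * k / n := by
          rcases eq_or_ne (n : ℝ) 0 with hn | hn
          · simp [hn]
          · field_simp
  · rw [intervalIntegral.integral_undef hV]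
    positivity

/-- Theorem 2.2, thermal concentration of the overlaps, fixed disorder:
if for every `h₀ ∈ (0,1)` the Gibbs measure of the perturbed Hamiltonian satisfies
`⟨σᵢσⱼ⟩ - ⟨σᵢ⟩⟨σⱼ⟩ ≥ 0` for all `i, j`, then for any `[h̲, h̄] ⊂ (0,1)`,
`∫_{h̲}^{h̄} ⟨(Q_k - ⟨Q_k⟩)²⟩ dh₀ ≤ 2k/n`. -/
theorem thermal_concentration_overlaps
    (n k : ℕ) (hn : 1 ≤ n) (hk : 1 ≤ k)
    (J : Finset (Fin n) → ℝ) (τ : Fin n → ℕ)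
    (h₁ : ℝ) (hh₁ : h₁ ∈ Set.Icc (0 : ℝ) 1)
    (hGKS2 : ∀ h₀ ∈ Set.Ioo (0 : ℝ) 1, ∀ i j : Fin n,
      magg n (Ham n J h₀ h₁ τ) i * magg n (Ham n J h₀ h₁ τ) j
        ≤ corrr n (Ham n J h₀ h₁ τ) i j)
    (hlow hhigh : ℝ) (h1 : 0 < hlow) (h2 : hlow ≤ hhigh) (h3 : hhigh < 1) :
    ∫ h₀ in hlow..hhigh,
        gibbsRep n k (Ham n J h₀ h₁ τ)
          (fun σs => (QkRep n k σs - avgQ n k (Ham n J h₀ h₁ τ)) ^ 2)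
      ≤ 2 * k / n :=
  thermal_concentration_overlaps_general n k J τ h₁ hGKS2 hlow hhigh h1 h2 h3
end

section
/- Let I ⊆ ℝ be an open interval and G, g : I → ℝ be convex differentiable functions. Fix x ∈ I and δ > 0 small enough that x ± δ ∈ I. Define C⁺_δ(x) = g'(x+δ) − g'(x) ≥ 0 and C⁻_δ(x) = g'(x) − g'(x−δ) ≥ 0. Then |G'(x) − g'(x)| ≤ δ⁻¹ (|G(x−δ) − g(x−δ)| + |G(x) − g(x)| + |G(x+δ) − g(x+δ)|) + C⁺_δ(x) + C⁻_δ(x). -/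
/-- Lemma 3.1, a bound on differences of derivatives via convexity:
for convex differentiable `G, g` on an open interval `I`, `x ∈ I`, `δ > 0` with
`x ± δ ∈ I`, one has
`|G'(x) - g'(x)| ≤ δ⁻¹ (|G(x-δ)-g(x-δ)| + |G(x)-g(x)| + |G(x+δ)-g(x+δ)|)
  + (g'(x+δ) - g'(x)) + (g'(x) - g'(x-δ))`. -/
theorem deriv_difference_bound_by_convexity
    (I : Set ℝ) (hI : IsOpen I) (hIconv : Convex ℝ I)
    (G g G' g' : ℝ → ℝ)
    (hG : ∀ x ∈ I, HasDerivAt G (G' x) x)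
    (hg : ∀ x ∈ I, HasDerivAt g (g' x) x)
    (hGconv : ConvexOn ℝ I G) (hgconv : ConvexOn ℝ I g)
    (x δ : ℝ) (hx : x ∈ I) (hδ : 0 < δ) (hxp : x + δ ∈ I) (hxm : x - δ ∈ I) :
    |G' x - g' x|
      ≤ δ⁻¹ * (|G (x - δ) - g (x - δ)| + |G x - g x| + |G (x + δ) - g (x + δ)|)
        + (g' (x + δ) - g' x) + (g' x - g' (x - δ)) := by
  have h1 : x - δ < x := by linarith
  have h2 : x < x + δ := by linarith
  -- slope inequalities
  have hG1 : slope G (x - δ) x ≤ G' x :=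
    hGconv.slope_le_of_hasDerivAt hxm hx h1 (hG x hx)
  have hG2 : G' x ≤ slope G x (x + δ) :=
    hGconv.le_slope_of_hasDerivAt hx hxp h2 (hG x hx)
  have hg1 : slope g (x - δ) x ≤ g' x :=
    hgconv.slope_le_of_hasDerivAt hxm hx h1 (hg x hx)
  have hg2 : g' x ≤ slope g x (x + δ) :=
    hgconv.le_slope_of_hasDerivAt hx hxp h2 (hg x hx)
  have hg3 : g' (x - δ) ≤ slope g (x - δ) x :=
    hgconv.le_slope_of_hasDerivAt hxm hx h1 (hg (x - δ) hxm)
  have hg4 : slope g x (x + δ) ≤ g' (x + δ) :=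
    hgconv.slope_le_of_hasDerivAt hx hxp h2 (hg (x + δ) hxp)
  have hs1 : slope G (x - δ) x = (G x - G (x - δ)) / δ := by
    rw [slope_def_field]; ring_nf
  have hs2 : slope G x (x + δ) = (G (x + δ) - G x) / δ := by
    rw [slope_def_field]; ring_nf
  have hs3 : slope g (x - δ) x = (g x - g (x - δ)) / δ := by
    rw [slope_def_field]; ring_nf
  have hs4 : slope g x (x + δ) = (g (x + δ) - g x) / δ := by
    rw [slope_def_field]; ring_nf
  rw [hs1] at hG1
  rw [hs3] at hg3
  rw [hs2] at hG2
  rw [hs3] at hg1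
  rw [hs4] at hg2
  rw [hs4] at hg4
  have habs : ∀ a : ℝ, a ≤ |a| := fun a => le_abs_self a
  have habs' : ∀ a : ℝ, -a ≤ |a| := fun a => neg_le_abs a
  have e1 := habs (G (x + δ) - g (x + δ))
  have e2 := habs' (G (x + δ) - g (x + δ))
  have e3 := habs (G x - g x)
  have e4 := habs' (G x - g x)
  have e5 := habs (G (x - δ) - g (x - δ))
  have e6 := habs' (G (x - δ) - g (x - δ))
  have hδ' : (0:ℝ) < δ⁻¹ := by positivity
  rw [abs_sub_le_iff]
  constructor
  · -- G' x - g' x ≤ ...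
    have : G' x - g' x ≤ (G (x + δ) - G x) / δ - (g (x + δ) - g x) / δ + (g' (x + δ) - g' x) := by
      linarith
    have hb : (G (x + δ) - G x) / δ - (g (x + δ) - g x) / δ
        ≤ δ⁻¹ * (|G x - g x| + |G (x + δ) - g (x + δ)|) := by
      rw [div_sub_div_same, div_eq_inv_mul]
      have : G (x + δ) - G x - (g (x + δ) - g x)
          ≤ |G x - g x| + |G (x + δ) - g (x + δ)| := by linarith
      exact mul_le_mul_of_nonneg_left this hδ'.le
    nlinarith [mul_nonneg hδ'.le (abs_nonneg (G (x - δ) - g (x - δ)))]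
  · have : g' x - G' x ≤ (g x - g (x - δ)) / δ - (G x - G (x - δ)) / δ + (g' x - g' (x - δ)) := by
      linarith
    have hb : (g x - g (x - δ)) / δ - (G x - G (x - δ)) / δ
        ≤ δ⁻¹ * (|G (x - δ) - g (x - δ)| + |G x - g x|) := by
      rw [div_sub_div_same, div_eq_inv_mul]
      have : g x - g (x - δ) - (G x - G (x - δ))
          ≤ |G (x - δ) - g (x - δ)| + |G x - g x| := by linarith
      exact mul_le_mul_of_nonneg_left this hδ'.le
    nlinarith [mul_nonneg hδ'.le (abs_nonneg (G (x + δ) - g (x + δ)))]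
end

section
/- Fix n ≥ 1. Let J_X, X ⊆ {1,…,n}, be independent real random variables with finite second moments such that Σ_{X⊆{1,…,n}} Var(J_X) ≤ C_P n for some constant C_P > 0. Then the pressure P_n = n⁻¹ ln Σ_{σ∈{±1}ⁿ} exp(Σ_X J_X σ_X) satisfies E[(P_n − E P_n)²] ≤ C_P/n. No sign assumption on the couplings is needed. -/
open MeasureTheory ProbabilityTheory Finset

/-!
Changing one coupling `J_X` by `δ` multiplies every Boltzmann weight by at most `e^{|δ|}`, so the
pressure is a `1/n`-Lipschitz function of the couplings for the `ℓ¹` distance. For functions of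
independent variables that are Lipschitz coordinatewise with weights `cᵢ`, the variance
tensorizes: splitting off one coordinate, `Var f ≤ E[Var₁ f] + Var(E₁ f)`, the conditional
variance is at most `c₁² Var X₁`, and `E₁ f` is again Lipschitz in the remaining coordinates.
Hence `Var Pₙ ≤ n⁻² ∑_X Var J_X ≤ C_P / n`.
-/

section Lipschitz

variable {Ω : Type*} [MeasurableSpace Ω] {μ : Measure Ω} [IsFiniteMeasure μ] {p : ENNReal}

lemma continuous_of_abs_sub_le {h : ℝ → ℝ} {c : ℝ}
    (hh : ∀ a b, |h a - h b| ≤ c * |a - b|) : Continuous h :=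
  (LipschitzWith.of_dist_le' (K := c) fun a b => by
    simpa only [Real.dist_eq] using hh a b).continuous

lemma continuous_of_abs_sub_le_sum {ι : Type*} [Fintype ι] {f : (ι → ℝ) → ℝ} {c : ι → ℝ}
    (hf : ∀ x y, |f x - f y| ≤ ∑ i, c i * |x i - y i|) : Continuous f := by
  refine (LipschitzWith.of_dist_le' (K := ∑ i, |c i|) fun x y => ?_).continuous
  calc dist (f x) (f y) ≤ ∑ i, c i * |x i - y i| := by simpa only [Real.dist_eq] using hf x y
    _ ≤ ∑ i, |c i| * dist x y := Finset.sum_le_sum fun i _ => by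
      calc c i * |x i - y i| ≤ |c i| * |x i - y i| := by gcongr; exact le_abs_self _
        _ ≤ |c i| * dist x y := by gcongr; simpa only [Real.dist_eq] using dist_le_pi_dist x y i
    _ = (∑ i, |c i|) * dist x y := (Finset.sum_mul ..).symm

lemma memLp_comp_of_abs_sub_le {X : Ω → ℝ} (hX : MemLp X p μ) {h : ℝ → ℝ} {c : ℝ}
    (hh : ∀ a b, |h a - h b| ≤ c * |a - b|) : MemLp (h ∘ X) p μ := by
  refine ((memLp_const |h 0|).add (hX.norm.const_mul c)).of_le
    ((continuous_of_abs_sub_le hh).comp_aestronglyMeasurable hX.1)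
    (Filter.Eventually.of_forall fun ω => ?_)
  have h1 := hh (X ω) 0
  rw [sub_zero] at h1
  calc ‖h (X ω)‖ ≤ |h 0| + c * |X ω| := by
        rw [Real.norm_eq_abs]; linarith [abs_sub_abs_le_abs_sub (h (X ω)) (h 0)]
    _ ≤ _ := Real.le_norm_self _

lemma memLp_comp_of_abs_sub_le_sum {ι : Type*} [Fintype ι] {X : ι → Ω → ℝ}
    (hX : ∀ i, MemLp (X i) p μ) {f : (ι → ℝ) → ℝ} {c : ι → ℝ}
    (hf : ∀ x y, |f x - f y| ≤ ∑ i, c i * |x i - y i|) :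
    MemLp (fun ω => f fun i => X i ω) p μ := by
  have hmeas : AEStronglyMeasurable (fun ω i => X i ω) μ :=
    (aemeasurable_pi_lambda _ fun i => (hX i).1.aemeasurable).aestronglyMeasurable
  refine ((memLp_const |f 0|).add
      (memLp_finsetSum Finset.univ fun i _ => (hX i).norm.const_mul (c i))).of_le
    ((continuous_of_abs_sub_le_sum hf).comp_aestronglyMeasurable hmeas)
    (Filter.Eventually.of_forall fun ω => ?_)
  have h1 := hf (fun i => X i ω) 0
  simp only [Pi.zero_apply, sub_zero] at h1
  calc ‖f fun i => X i ω‖ ≤ |f 0| + ∑ i, c i * |X i ω| := by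
        rw [Real.norm_eq_abs]; linarith [abs_sub_abs_le_abs_sub (f fun i => X i ω) (f 0)]
    _ ≤ _ := Real.le_norm_self _

lemma memLp_pi_of_abs_sub_le_sum {ι : Type*} [Fintype ι] {ν : ι → Measure ℝ}
    [∀ i, IsProbabilityMeasure (ν i)] (hν : ∀ i, MemLp id p (ν i)) {f : (ι → ℝ) → ℝ}
    {c : ι → ℝ} (hf : ∀ x y, |f x - f y| ≤ ∑ i, c i * |x i - y i|) :
    MemLp f p (Measure.pi ν) :=
  memLp_comp_of_abs_sub_le_sum
    (fun i => (hν i).comp_measurePreserving (measurePreserving_eval ν i)) hf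

end Lipschitz

section Variance

variable {Ω : Type*} [MeasurableSpace Ω] {μ : Measure Ω} [IsProbabilityMeasure μ]

lemma integral_sq_sub_const_eq_variance_add {X : Ω → ℝ} (hX : MemLp X 2 μ) (c : ℝ) :
    ∫ ω, (X ω - c) ^ 2 ∂μ = Var[X; μ] + (μ[X] - c) ^ 2 := by
  have h := variance_eq_sub (hX.sub (memLp_const c))
  rw [show X - (fun _ => c) = fun ω => X ω - c from rfl, variance_sub_const hX.1] at h
  rw [h, integral_sub (hX.integrable one_le_two) (integrable_const c)]
  simp

lemma variance_comp_le_of_abs_sub_le {X : Ω → ℝ} (hX : MemLp X 2 μ) {h : ℝ → ℝ} {c : ℝ}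
    (hh : ∀ a b, |h a - h b| ≤ c * |a - b|) : Var[h ∘ X; μ] ≤ c ^ 2 * Var[X; μ] := by
  have hhX := memLp_comp_of_abs_sub_le hX hh
  calc Var[h ∘ X; μ] ≤ Var[h ∘ X; μ] + (μ[h ∘ X] - h μ[X]) ^ 2 :=
        le_add_of_nonneg_right (sq_nonneg _)
    _ = ∫ ω, (h (X ω) - h μ[X]) ^ 2 ∂μ := (integral_sq_sub_const_eq_variance_add hhX _).symm
    _ ≤ ∫ ω, c ^ 2 * (X ω - μ[X]) ^ 2 ∂μ := by
        refine integral_mono (hhX.sub (memLp_const _)).integrable_sq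
          ((hX.sub (memLp_const _)).integrable_sq.const_mul _) fun ω => ?_
        calc (h (X ω) - h μ[X]) ^ 2 = |h (X ω) - h μ[X]| ^ 2 := (sq_abs _).symm
          _ ≤ (c * |X ω - μ[X]|) ^ 2 := pow_le_pow_left₀ (abs_nonneg _) (hh _ _) 2
          _ = c ^ 2 * (X ω - μ[X]) ^ 2 := by rw [mul_pow, sq_abs]
    _ = c ^ 2 * Var[X; μ] := by
        rw [integral_const_mul, variance_eq_integral hX.1.aemeasurable]

lemma variance_prod_le_add {α β : Type*} [MeasurableSpace α] [MeasurableSpace β]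
    {ν : Measure α} {π : Measure β} [IsProbabilityMeasure ν] [IsProbabilityMeasure π]
    {F : α × β → ℝ} (hF : MemLp F 2 (ν.prod π)) (hsec : ∀ y, MemLp (fun a => F (a, y)) 2 ν)
    (hg : MemLp (fun y => ∫ a, F (a, y) ∂ν) 2 π) {V : ℝ}
    (hV : ∀ y, Var[fun a => F (a, y); ν] ≤ V) :
    Var[F; ν.prod π] ≤ V + Var[fun y => ∫ a, F (a, y) ∂ν; π] := by
  set g := fun y => ∫ a, F (a, y) ∂ν
  have hm : ∫ y, g y ∂π = ∫ z, F z ∂(ν.prod π) :=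
    (integral_prod_symm F (hF.integrable one_le_two)).symm
  set m := ∫ z, F z ∂(ν.prod π)
  have hgm : Integrable (fun y => (g y - m) ^ 2) π := (hg.sub (memLp_const m)).integrable_sq
  calc Var[F; ν.prod π] = ∫ y, ∫ a, (F (a, y) - m) ^ 2 ∂ν ∂π := by
        rw [variance_eq_integral hF.1.aemeasurable]
        exact integral_prod_symm (fun z => (F z - m) ^ 2) (hF.sub (memLp_const m)).integrable_sq
    _ ≤ ∫ y, (V + (g y - m) ^ 2) ∂π := by
        refine integral_mono_of_nonneg (ae_of_all _ fun y => integral_nonneg fun a => sq_nonneg _)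
          ((integrable_const V).add hgm) (ae_of_all _ fun y => ?_)
        dsimp only
        rw [integral_sq_sub_const_eq_variance_add (hsec y)]
        exact add_le_add_left (hV y) _
    _ = V + Var[g; π] := by
        rw [integral_add (integrable_const V) hgm, integral_const, probReal_univ, one_smul,
          variance_eq_integral hg.1.aemeasurable, hm]

end Variance

lemma measurePreserving_finCons {N : ℕ} {α : Type*} [MeasurableSpace α]
    (ν : Fin (N + 1) → Measure α) [∀ i, SigmaFinite (ν i)] :
    MeasurePreserving (fun p : α × (Fin N → α) => (Fin.cons p.1 p.2 : Fin (N + 1) → α))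
      ((ν 0).prod (Measure.pi fun j => ν j.succ)) (Measure.pi ν) := by
  have he := (measurePreserving_piFinSuccAbove ν 0).symm
  simp only [Fin.succAbove_zero] at he
  convert he using 1
  funext p
  rw [MeasurableEquiv.piFinSuccAbove_symm_apply]
  exact (Fin.insertNth_zero' p.1 p.2).symm

lemma abs_integral_sub_integral_le {α : Type*} [MeasurableSpace α] {ν : Measure α}
    [IsProbabilityMeasure ν] {u v : α → ℝ} (hu : Integrable u ν) (hv : Integrable v ν) {K : ℝ}
    (h : ∀ a, |u a - v a| ≤ K) : |∫ a, u a ∂ν - ∫ a, v a ∂ν| ≤ K := by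
  rw [← integral_sub hu hv]
  simpa using norm_integral_le_of_norm_le_const (μ := ν) (f := fun a => u a - v a) (ae_of_all _ h)

theorem variance_pi_le_sum_of_abs_sub_le : ∀ {N : ℕ} (ν : Fin N → Measure ℝ)
    [∀ i, IsProbabilityMeasure (ν i)], (∀ i, MemLp id 2 (ν i)) →
    ∀ {f : (Fin N → ℝ) → ℝ} {c : Fin N → ℝ}, (∀ x y, |f x - f y| ≤ ∑ i, c i * |x i - y i|) →
    Var[f; Measure.pi ν] ≤ ∑ i, c i ^ 2 * Var[id; ν i]
  | 0, ν, _, _, f, _, _ => by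
    rw [Measure.pi_of_empty, variance_dirac, Finset.univ_eq_empty, Finset.sum_empty]
  | N + 1, ν, _, hν, f, c, hf => by
    let ν' := fun j : Fin N => ν j.succ
    let F : ℝ × (Fin N → ℝ) → ℝ := fun p => f (Fin.cons p.1 p.2)
    have hF : ∀ a b y y', |F (a, y) - F (b, y')|
        ≤ c 0 * |a - b| + ∑ j, c j.succ * |y j - y' j| := fun a b y y' => by
      simpa only [Fin.sum_univ_succ, Fin.cons_zero, Fin.cons_succ] using
        hf (Fin.cons a y) (Fin.cons b y')
    have hsec : ∀ y a b, |F (a, y) - F (b, y)| ≤ c 0 * |a - b| := fun y a b => by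
      simpa using hF a b y y
    have hsecLp : ∀ y, MemLp (fun a => F (a, y)) 2 (ν 0) := fun y =>
      memLp_comp_of_abs_sub_le (hν 0) (hsec y)
    have hg : ∀ y y', |∫ a, F (a, y) ∂ν 0 - ∫ a, F (a, y') ∂ν 0|
        ≤ ∑ j, c j.succ * |y j - y' j| := fun y y' =>
      abs_integral_sub_integral_le ((hsecLp y).integrable one_le_two)
        ((hsecLp y').integrable one_le_two) fun a => by simpa using hF a a y y'
    have he := measurePreserving_finCons ν
    have hfLp := memLp_pi_of_abs_sub_le_sum hν hf
    have hFLp : MemLp F 2 ((ν 0).prod (Measure.pi ν')) := hfLp.comp_measurePreserving he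
    calc Var[f; Measure.pi ν] = Var[F; (ν 0).prod (Measure.pi ν')] :=
          (he.variance_fun_comp hfLp.1.aemeasurable).symm
      _ ≤ c 0 ^ 2 * Var[id; ν 0] + Var[fun y => ∫ a, F (a, y) ∂ν 0; Measure.pi ν'] :=
          variance_prod_le_add hFLp hsecLp
            (memLp_pi_of_abs_sub_le_sum (fun j => hν j.succ) hg)
            fun y => variance_comp_le_of_abs_sub_le (h := fun a => F (a, y)) (hν 0) (hsec y)
      _ ≤ c 0 ^ 2 * Var[id; ν 0] + ∑ j, c j.succ ^ 2 * Var[id; ν' j] :=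
          add_le_add_right (variance_pi_le_sum_of_abs_sub_le ν' (fun j => hν j.succ) hg) _
      _ = ∑ i, c i ^ 2 * Var[id; ν i] := (Fin.sum_univ_succ fun i => c i ^ 2 * Var[id; ν i]).symm

namespace ProbabilityTheory

variable {Ω : Type*} [MeasurableSpace Ω] {μ : Measure Ω} [IsProbabilityMeasure μ]

lemma iIndepFun.variance_comp_le_sum_fin {N : ℕ} {X : Fin N → Ω → ℝ} (hX : iIndepFun X μ)
    (hX2 : ∀ i, MemLp (X i) 2 μ) {f : (Fin N → ℝ) → ℝ} {c : Fin N → ℝ}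
    (hf : ∀ x y, |f x - f y| ≤ ∑ i, c i * |x i - y i|) :
    Var[fun ω => f fun i => X i ω; μ] ≤ ∑ i, c i ^ 2 * Var[X i; μ] := by
  have hXm : ∀ i, AEMeasurable (X i) μ := fun i => (hX2 i).1.aemeasurable
  have := fun i => Measure.isProbabilityMeasure_map (μ := μ) (hXm i)
  have hν : ∀ i, MemLp id 2 (μ.map (X i)) := fun i =>
    (memLp_map_measure_iff aestronglyMeasurable_id (hXm i)).2 (hX2 i)
  have hlaw := hX.map_fun_eq_pi_map hXm
  calc Var[fun ω => f fun i => X i ω; μ] = Var[f; μ.map fun ω i => X i ω] :=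
        (variance_map (by rw [hlaw]; exact (memLp_pi_of_abs_sub_le_sum hν hf).1.aemeasurable)
          (aemeasurable_pi_lambda _ hXm)).symm
    _ ≤ ∑ i, c i ^ 2 * Var[id; μ.map (X i)] := hlaw ▸ variance_pi_le_sum_of_abs_sub_le _ hν hf
    _ = ∑ i, c i ^ 2 * Var[X i; μ] := by simp_rw [variance_id_map (hXm _)]

theorem iIndepFun.variance_comp_le_sum {ι : Type*} [Fintype ι] {X : ι → Ω → ℝ}
    (hX : iIndepFun X μ) (hX2 : ∀ i, MemLp (X i) 2 μ) {f : (ι → ℝ) → ℝ} {c : ι → ℝ}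
    (hf : ∀ x y, |f x - f y| ≤ ∑ i, c i * |x i - y i|) :
    Var[fun ω => f fun i => X i ω; μ] ≤ ∑ i, c i ^ 2 * Var[X i; μ] := by
  let e := (Fintype.equivFin ι).symm
  have hf' : ∀ x y : Fin (Fintype.card ι) → ℝ,
      |f (fun j => x (e.symm j)) - f (fun j => y (e.symm j))| ≤ ∑ i, c (e i) * |x i - y i| :=
    fun x y => by
    simpa only [← e.sum_comp, Equiv.symm_apply_apply] using
      hf (fun j => x (e.symm j)) (fun j => y (e.symm j))
  simpa only [Equiv.apply_symm_apply, e.sum_comp (fun i => c i ^ 2 * Var[X i; μ])] using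
    (hX.precomp e.injective).variance_comp_le_sum_fin (fun i => hX2 (e i)) hf'

end ProbabilityTheory

lemma Real.log_sum_exp_le_log_sum_exp_add {α : Type*} [Fintype α] [Nonempty α] {a b : α → ℝ}
    {K : ℝ} (h : ∀ σ, a σ ≤ b σ + K) :
    Real.log (∑ σ, Real.exp (a σ)) ≤ Real.log (∑ σ, Real.exp (b σ)) + K := by
  have hpos : 0 < ∑ σ, Real.exp (b σ) := Finset.sum_pos (fun σ _ => Real.exp_pos _) univ_nonempty
  rw [← Real.log_exp K, ← Real.log_mul hpos.ne' (Real.exp_pos K).ne', Finset.sum_mul]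
  refine Real.log_le_log (Finset.sum_pos (fun σ _ => Real.exp_pos _) univ_nonempty)
    (Finset.sum_le_sum fun σ _ => ?_)
  rw [← Real.exp_add]
  exact Real.exp_le_exp.2 (h σ)

section Pressure

noncomputable def pressure (n : ℕ) (x : Finset (Fin n) → ℝ) : ℝ :=
  (n : ℝ)⁻¹ * Real.log (Zp n (Ham n x 0 0 fun _ => 0))

lemma abs_spinProd {n : ℕ} (X : Finset (Fin n)) (σ : Fin n → Bool) : |spinProd X σ| = 1 := by
  rw [spinProd, Finset.abs_prod]
  exact Finset.prod_eq_one fun i _ => by cases σ i <;> simp [spinVal]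

lemma neg_Ham_le_add (n : ℕ) (x y : Finset (Fin n) → ℝ) (σ : Fin n → Bool) :
    -Ham n x 0 0 (fun _ => 0) σ ≤ -Ham n y 0 0 (fun _ => 0) σ + ∑ X, |x X - y X| := by
  simp only [Ham, zero_mul, sub_zero, neg_neg, ← sub_le_iff_le_add', ← Finset.sum_sub_distrib]
  refine Finset.sum_le_sum fun X _ => ?_
  calc x X * spinProd X σ - y X * spinProd X σ ≤ |(x X - y X) * spinProd X σ| := by
        rw [sub_mul]; exact le_abs_self _
    _ = |x X - y X| := by rw [abs_mul, abs_spinProd, mul_one]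

lemma abs_pressure_sub_le (n : ℕ) (x y : Finset (Fin n) → ℝ) :
    |pressure n x - pressure n y| ≤ ∑ X, (n : ℝ)⁻¹ * |x X - y X| := by
  have hlog : ∀ x y : Finset (Fin n) → ℝ, Real.log (Zp n (Ham n x 0 0 fun _ => 0))
      ≤ Real.log (Zp n (Ham n y 0 0 fun _ => 0)) + ∑ X, |x X - y X| := fun x y =>
    Real.log_sum_exp_le_log_sum_exp_add (neg_Ham_le_add n x y)
  have hsymm : ∑ X, |y X - x X| = ∑ X, |x X - y X| :=
    Finset.sum_congr rfl fun X _ => abs_sub_comm _ _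
  rw [pressure, pressure, ← mul_sub, abs_mul, abs_of_nonneg (by positivity), ← Finset.mul_sum]
  refine mul_le_mul_of_nonneg_left (abs_sub_le_iff.2 ⟨?_, ?_⟩) (by positivity)
  · linarith [hlog x y]
  · linarith [hlog y x]

end Pressure

theorem pressure_concentration_general
    {Ω : Type*} [MeasurableSpace Ω] (μ : Measure Ω) [IsProbabilityMeasure μ]
    (n : ℕ) (C_P : ℝ)
    (J : Ω → Finset (Fin n) → ℝ)
    (hJindep : iIndepFun (fun X ω => J ω X) μ)
    (hJL2 : ∀ X, MemLp (fun ω => J ω X) 2 μ)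
    (hVar : ∑ X : Finset (Fin n), variance (fun ω => J ω X) μ ≤ C_P * n) :
    ∫ ω, ((n : ℝ)⁻¹ * Real.log (Zp n (Ham n (J ω) 0 0 fun _ => 0))
        - ∫ ω', (n : ℝ)⁻¹ * Real.log (Zp n (Ham n (J ω') 0 0 fun _ => 0)) ∂μ) ^ 2 ∂μ
      ≤ C_P / n := by
  have hP : MemLp (fun ω => pressure n (J ω)) 2 μ :=
    memLp_comp_of_abs_sub_le_sum hJL2 (abs_pressure_sub_le n)
  calc ∫ ω, (pressure n (J ω) - ∫ ω', pressure n (J ω') ∂μ) ^ 2 ∂μ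
      = Var[fun ω => pressure n (J ω); μ] := (variance_eq_integral hP.1.aemeasurable).symm
    _ ≤ ∑ X, ((n : ℝ)⁻¹) ^ 2 * Var[fun ω => J ω X; μ] :=
        hJindep.variance_comp_le_sum hJL2 (abs_pressure_sub_le n)
    _ ≤ ((n : ℝ)⁻¹) ^ 2 * (C_P * n) := by rw [← Finset.mul_sum]; gcongr
    _ = C_P / n := by
        rcases eq_or_ne (n : ℝ) 0 with hn | hn
        · simp [hn]
        · field_simp

/-- Proposition B.1, concentration of the pressure: if the couplings
`J_X` are independent with finite second moments and `∑_X Var(J_X) ≤ C_P n`, then the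
pressure `P_n = n⁻¹ ln ∑_σ exp(∑_X J_X σ_X)` satisfies `E[(P_n - E P_n)²] ≤ C_P/n`. -/
theorem pressure_concentration
    {Ω : Type*} [MeasurableSpace Ω] (μ : Measure Ω) [IsProbabilityMeasure μ]
    (n : ℕ) (hn : 1 ≤ n) (C_P : ℝ) (hCP : 0 < C_P)
    (J : Ω → Finset (Fin n) → ℝ)
    (hJmeas : ∀ X, Measurable fun ω => J ω X)
    (hJindep : iIndepFun (fun X ω => J ω X) μ)
    (hJL2 : ∀ X, MemLp (fun ω => J ω X) 2 μ)
    (hVar : ∑ X : Finset (Fin n), variance (fun ω => J ω X) μ ≤ C_P * n) :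
    ∫ ω, ((n : ℝ)⁻¹ * Real.log (Zp n (Ham n (J ω) 0 0 fun _ => 0))
        - ∫ ω', (n : ℝ)⁻¹ * Real.log (Zp n (Ham n (J ω') 0 0 fun _ => 0)) ∂μ) ^ 2 ∂μ
      ≤ C_P / n :=
  pressure_concentration_general μ n C_P J hJindep hJL2 hVar
end

section
/- Let g : ℕ → ℝ and ν₀ > 0 be such that Σ_{k=0}^∞ |g(k)| νᵏ/k! < ∞ for all ν in a neighborhood of ν₀. Define F(ν) = Σ_{k=0}^∞ g(k) νᵏ e^{−ν}/k!, the expectation of g under the Poisson distribution with mean ν. Then F is differentiable at ν₀ with F'(ν₀) = E[g(X+1)] − E[g(X)], where X ~ Poisson(ν₀); that is, F'(ν₀) = Σ_{k=0}^∞ (g(k+1) − g(k)) ν₀ᵏ e^{−ν₀}/k!. -/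
/-!
Write `F(ν) = e^{-ν} S(ν)` with the power series `S(ν) = ∑ (g k / k!) νᵏ`. The hypothesis says
that `S` converges absolutely at some `ρ > ν₀`, so it can be differentiated termwise at `ν₀`. The
differentiated series has coefficients `(k + 1) · g (k + 1) / (k + 1)! = g (k + 1) / k!`, and the
product rule gives `F' = e^{-ν} (S' - S)`.
-/

open Topology Metric

section RealPowerSeries

variable {a : ℕ → ℝ} {ρ : ℝ}

lemma exists_natCast_mul_pow_sub_one_le {r : ℝ} (hr : 0 ≤ r) (hrρ : r < ρ) :
    ∃ C, ∀ k : ℕ, (k : ℝ) * r ^ (k - 1) ≤ C * ρ ^ k := by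
  have hρ : 0 < ρ := hr.trans_lt hrρ
  set q := r / ρ
  have hq : 0 ≤ q := div_nonneg hr hρ.le
  have hq1 : q < 1 := (div_lt_one hρ).mpr hrρ
  obtain ⟨M, hM⟩ : ∃ M, ∀ n : ℕ, ((n : ℝ) + 1) * q ^ n ≤ M := by
    have := (tendsto_self_mul_const_pow_of_lt_one hq hq1).add
      (tendsto_pow_atTop_nhds_zero_of_lt_one hq hq1)
    simp only [add_zero, ← add_one_mul] at this
    obtain ⟨M, hM⟩ := this.bddAbove_range
    exact ⟨M, fun n => hM ⟨n, rfl⟩⟩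
  refine ⟨M / ρ, fun k => ?_⟩
  rcases k with _ | n
  · have : 1 ≤ M := by simpa using hM 0
    simp only [CharP.cast_eq_zero, zero_mul, pow_zero, mul_one]
    positivity
  · calc ((n + 1 : ℕ) : ℝ) * r ^ (n + 1 - 1) = ((n : ℝ) + 1) * q ^ n * ρ ^ n := by
          simp only [q, div_pow, Nat.add_sub_cancel]
          push_cast
          field_simp
      _ ≤ M * ρ ^ n := by gcongr; exact hM n
      _ = M / ρ * ρ ^ (n + 1) := by field_simp; ring

lemma summable_mul_pow_of_abs_le (ha : Summable fun k => |a k| * ρ ^ k) {x : ℝ}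
    (hx : |x| ≤ ρ) : Summable fun k => a k * x ^ k :=
  .of_norm_bounded ha fun k => by
    rw [Real.norm_eq_abs, abs_mul, abs_pow]
    gcongr

lemma summable_abs_mul_natCast_mul_pow_sub_one (ha : Summable fun k => |a k| * ρ ^ k) {r : ℝ}
    (hr : 0 ≤ r) (hrρ : r < ρ) : Summable fun k => |a k| * (k * r ^ (k - 1)) := by
  obtain ⟨C, hC⟩ := exists_natCast_mul_pow_sub_one_le hr hrρ
  refine .of_nonneg_of_le (fun k => by positivity) (fun k => ?_) (ha.mul_left C)
  calc |a k| * (k * r ^ (k - 1)) ≤ |a k| * (C * ρ ^ k) :=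
        mul_le_mul_of_nonneg_left (hC k) (abs_nonneg _)
    _ = C * (|a k| * ρ ^ k) := by ring

lemma summable_mul_natCast_mul_pow_sub_one (ha : Summable fun k => |a k| * ρ ^ k) {x : ℝ}
    (hx : |x| < ρ) : Summable fun k => a k * (k * x ^ (k - 1)) :=
  .of_norm_bounded (summable_abs_mul_natCast_mul_pow_sub_one ha (abs_nonneg x) hx) fun k => by
    rw [Real.norm_eq_abs, abs_mul, abs_mul, abs_pow, Nat.abs_cast]

lemma tsum_mul_natCast_mul_pow_sub_one (ha : Summable fun k => |a k| * ρ ^ k) {x : ℝ}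
    (hx : |x| < ρ) : ∑' k, a k * (k * x ^ (k - 1)) = ∑' k, (k + 1) * a (k + 1) * x ^ k := by
  rw [(summable_mul_natCast_mul_pow_sub_one ha hx).tsum_eq_zero_add]
  simp only [CharP.cast_eq_zero, zero_mul, mul_zero, zero_add]
  refine tsum_congr fun k => ?_
  push_cast
  ring

lemma summable_succ_mul_mul_pow (ha : Summable fun k => |a k| * ρ ^ k) {x : ℝ} (hx : |x| < ρ) :
    Summable fun k => (k + 1) * a (k + 1) * x ^ k := by
  refine ((summable_nat_add_iff 1).mpr (summable_mul_natCast_mul_pow_sub_one ha hx)).congr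
    fun k => ?_
  push_cast
  ring

theorem hasDerivAt_tsum_mul_pow (ha : Summable fun k => |a k| * ρ ^ k) {x : ℝ} (hx : |x| < ρ) :
    HasDerivAt (fun y => ∑' k, a k * y ^ k) (∑' k, (k + 1) * a (k + 1) * x ^ k) x := by
  obtain ⟨r, hxr, hrρ⟩ := exists_between hx
  have hx_mem : x ∈ ball (0 : ℝ) r := by rwa [mem_ball_zero_iff, Real.norm_eq_abs]
  have hbound : ∀ k, ∀ y ∈ ball (0 : ℝ) r,
      ‖a k * (k * y ^ (k - 1))‖ ≤ |a k| * (k * r ^ (k - 1)) := by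
    intro k y hy
    rw [mem_ball_zero_iff, Real.norm_eq_abs] at hy
    rw [Real.norm_eq_abs, abs_mul, abs_mul, abs_pow, Nat.abs_cast]
    gcongr
  rw [← tsum_mul_natCast_mul_pow_sub_one ha hx]
  exact hasDerivAt_tsum_of_isPreconnected (g := fun k y => a k * y ^ k)
    (summable_abs_mul_natCast_mul_pow_sub_one ha ((abs_nonneg x).trans hxr.le) hrρ) isOpen_ball
    (convex_ball 0 r).isPreconnected (fun k y _ => (hasDerivAt_pow k y).const_mul (a k))
    hbound hx_mem (summable_mul_pow_of_abs_le ha hx.le) hx_mem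

end RealPowerSeries

/-- derivative of a Poisson expectation in its mean: if
`∑_k |g(k)| νᵏ/k! < ∞` for all `ν` in a neighborhood of `ν₀ > 0`, then
`F(ν) = E[g(X_ν)] = ∑_k g(k) νᵏ e^{-ν}/k!` is differentiable at `ν₀` with
`F'(ν₀) = E[g(X+1)] - E[g(X)] = ∑_k (g(k+1) - g(k)) ν₀ᵏ e^{-ν₀}/k!`. -/
theorem poisson_expectation_hasDerivAt
    (g : ℕ → ℝ) (ν₀ : ℝ) (hν₀ : 0 < ν₀)
    (hsum : ∀ᶠ ν in nhds ν₀,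
      Summable fun k : ℕ => |g k| * ν ^ k / (Nat.factorial k : ℝ)) :
    HasDerivAt
      (fun ν : ℝ => ∑' k : ℕ, g k * ν ^ k * Real.exp (-ν) / (Nat.factorial k : ℝ))
      (∑' k : ℕ, (g (k + 1) - g k) * ν₀ ^ k * Real.exp (-ν₀) / (Nat.factorial k : ℝ))
      ν₀ := by
  obtain ⟨ρ, hρ, hν₀ρ⟩ : ∃ ρ, (Summable fun k : ℕ => |g k| * ρ ^ k / (k.factorial : ℝ)) ∧
      ν₀ < ρ :=
    ((hsum.filter_mono nhdsWithin_le_nhds).and self_mem_nhdsWithin).exists (f := 𝓝[>] ν₀)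
  set a : ℕ → ℝ := fun k => g k / k.factorial
  have ha : Summable fun k => |a k| * ρ ^ k :=
    hρ.congr fun k => by simp only [a, abs_div, Nat.abs_cast]; ring
  have hx : |ν₀| < ρ := by rwa [abs_of_pos hν₀]
  have hF : (fun ν : ℝ => ∑' k : ℕ, g k * ν ^ k * Real.exp (-ν) / (k.factorial : ℝ)) =
      fun ν => (∑' k, a k * ν ^ k) * Real.exp (-ν) := by
    funext ν
    rw [← tsum_mul_right]
    congr with k
    simp only [a]
    ring
  have hterm : ∀ k : ℕ, (g (k + 1) - g k) * ν₀ ^ k * Real.exp (-ν₀) / (k.factorial : ℝ) =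
      ((k + 1) * a (k + 1) * ν₀ ^ k - a k * ν₀ ^ k) * Real.exp (-ν₀) := by
    intro k
    simp only [a, Nat.factorial_succ]
    push_cast
    field_simp
  rw [hF, tsum_congr hterm, tsum_mul_right,
    (summable_succ_mul_mul_pow ha hx).tsum_sub (summable_mul_pow_of_abs_le ha hx.le)]
  exact ((hasDerivAt_tsum_mul_pow ha hx).fun_mul (hasDerivAt_neg ν₀).exp).congr_deriv (by ring)
end
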